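/- Let f be a maximum flow in the profit sharing graph associated with trades E, profits w, players N and incidence map B. Then for every coalition S ⊆ N, the total flow on the extended set of ingoing edges of S satisfies ∑_{e ∈ E : B e ∩ S ≠ ∅} f(s, e) ≥ v(S). -/
import Mathlib


open Finset

/-- Vertices of the profit sharing graph: source, sink, a node per trade, a node per player. -/
inductive PSV (E N : Type) where
  | src | snk | trade (e : E) | player (b : N)
  deriving DecidableEq, Fintype

/-- `f` is an `s`-`t` flow for capacities `u`: nonnegative, capacity-respecting,
and flow is conserved at every vertex other than `s` and `t`. -/
def IsFlow {V : Type} [Fintype V] (s t : V) (u : V → V → ℝ) (f : V → V → ℝ) : Prop :=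
  (∀ v w, 0 ≤ f v w) ∧ (∀ v w, f v w ≤ u v w) ∧
    ∀ v, v ≠ s → v ≠ t → (∑ w, f w v) = ∑ w, f v w

/-- The value of a flow: net outflow of the source `s`. -/
def flowValue {V : Type} [Fintype V] (s : V) (f : V → V → ℝ) : ℝ :=
  (∑ w, f s w) - ∑ w, f w s

/-- A maximum flow: a flow whose value is greatest among all `s`-`t` flows. -/
def IsMaxFlow {V : Type} [Fintype V] (s t : V) (u : V → V → ℝ) (f : V → V → ℝ) : Prop :=
  IsFlow s t u f ∧ ∀ g, IsFlow s t u g → flowValue s g ≤ flowValue s f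

/-- Capacities of the profit sharing graph for trades `E` with profits `w`,
players `N` and incidence map `B`. -/
noncomputable def psCap {E N : Type} [Fintype E] [DecidableEq N]
    (w : E → ℝ) (B : E → Finset N) : PSV E N → PSV E N → ℝ
  | .src, .trade e => w e
  | .trade e, .player b => if b ∈ B e then w e else 0
  | .player b, .snk => ∑ e ∈ Finset.univ.filter (fun e => b ∈ B e), w e
  | _, _ => 0

/-- Characteristic function of the associated cooperative game:
`v S` is the total profit of trades all of whose players lie in `S`. -/
noncomputable def charFun {E N : Type} [Fintype E] [DecidableEq N]
    (w : E → ℝ) (B : E → Finset N) (S : Finset N) : ℝ :=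
  ∑ e ∈ Finset.univ.filter (fun e => B e ⊆ S), w e

/-- Equivalence to a sum type, to compute sums over `PSV E N`. -/
def psvEquiv (E N : Type) : PSV E N ≃ (Unit ⊕ Unit) ⊕ (E ⊕ N) where
  toFun v := match v with
    | .src => .inl (.inl ())
    | .snk => .inl (.inr ())
    | .trade e => .inr (.inl e)
    | .player b => .inr (.inr b)
  invFun x := match x with
    | .inl (.inl _) => .src
    | .inl (.inr _) => .snk
    | .inr (.inl e) => .trade e
    | .inr (.inr b) => .player b
  left_inv v := by cases v <;> rfl
  right_inv x := by rcases x with (⟨⟩ | ⟨⟩) | (e | b) <;> rfl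

lemma psv_sum {E N : Type} [Fintype E] [Fintype N] (F : PSV E N → ℝ) :
    ∑ v, F v = F .src + F .snk + (∑ e, F (.trade e)) + ∑ b, F (.player b) := by
  rw [← Equiv.sum_comp (psvEquiv E N).symm F]
  simp [Fintype.sum_sum_type, psvEquiv]
  ring

/-- For a maximum flow `f` in the profit sharing graph and any coalition `S`, the total flow
on the extended set of ingoing edges of `S` (the edges `(src, e)` with `B e ∩ S ≠ ∅`)
is at least `v(S)`. -/
theorem flow_on_extended_ingoing_edges_ge {E N : Type} [Fintype E] [Fintype N]
    [DecidableEq E] [DecidableEq N]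
    (w : E → ℝ) (hw : ∀ e, 0 ≤ w e) (B : E → Finset N) (hB : ∀ e, B e ≠ ∅)
    (f : PSV E N → PSV E N → ℝ)
    (hf : IsMaxFlow PSV.src PSV.snk (psCap w B) f) :
    ∀ S : Finset N,
      charFun w B S ≤
        ∑ e ∈ Finset.univ.filter (fun e => (B e ∩ S).Nonempty), f PSV.src (PSV.trade e) := by
  intro S
  have hBne : ∀ e, (B e).Nonempty := fun e => Finset.nonempty_iff_ne_empty.mpr (hB e)
  set pick : E → N := fun e => (hBne e).choose with hpick
  have hpickmem : ∀ e, pick e ∈ B e := fun e => (hBne e).choose_spec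
  -- the canonical flow g saturating all source edges
  set g : PSV E N → PSV E N → ℝ := fun v v' => match v, v' with
    | .src, .trade e => w e
    | .trade e, .player b => if pick e = b then w e else 0
    | .player b, .snk => ∑ e ∈ Finset.univ.filter (fun e => pick e = b), w e
    | _, _ => 0 with hg
  have hgflow : IsFlow PSV.src PSV.snk (psCap w B) g := by
    refine ⟨?_, ?_, ?_⟩
    · intro v v'
      cases v <;> cases v' <;> simp [hg] <;>
        first
        | exact hw _
        | (split <;> simp [hw _])
        | exact Finset.sum_nonneg fun e _ => hw e
    · intro v v'
      cases v <;> cases v' <;> simp [hg, psCap]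
      case trade.player e b =>
        by_cases h : pick e = b
        · subst h; simp [hpickmem e]
        · simp only [h, if_false]
          split <;> simp [hw]
      case player.snk b =>
        apply Finset.sum_le_sum_of_subset_of_nonneg
        · intro e he
          simp only [Finset.mem_filter, Finset.mem_univ, true_and] at he ⊢
          exact he ▸ hpickmem e
        · intro e _ _; exact hw e
    · intro v hs ht
      cases v with
      | src => exact absurd rfl hs
      | snk => exact absurd rfl ht
      | trade e =>
        rw [psv_sum, psv_sum]
        simp [hg, Finset.sum_ite_eq]
      | player b =>
        rw [psv_sum, psv_sum]
        simp [hg, Finset.sum_filter]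
  have hval : flowValue PSV.src g = ∑ e, w e := by
    unfold flowValue
    rw [psv_sum, psv_sum]
    simp [hg]
  obtain ⟨⟨hf0, hfcap, _⟩, hfmax⟩ := hf
  have hge : ∑ e, w e ≤ ∑ e, f PSV.src (PSV.trade e) := by
    have h1 := hfmax g hgflow
    rw [hval] at h1
    have h2 : flowValue PSV.src f ≤ ∑ e, f PSV.src (PSV.trade e) := by
      unfold flowValue
      rw [psv_sum]
      have hz : ∀ v, f PSV.src v ≤ psCap w B PSV.src v := fun v => hfcap _ _
      have h3 : f PSV.src PSV.src = 0 :=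
        le_antisymm (by simpa [psCap] using hz PSV.src) (hf0 _ _)
      have h4 : f PSV.src PSV.snk = 0 :=
        le_antisymm (by simpa [psCap] using hz PSV.snk) (hf0 _ _)
      have h5 : ∀ b, f PSV.src (PSV.player b) = 0 := fun b =>
        le_antisymm (by simpa [psCap] using hz (PSV.player b)) (hf0 _ _)
      have h6 : 0 ≤ ∑ v, f v PSV.src := Finset.sum_nonneg fun v _ => hf0 _ _
      simp [h3, h4, h5]
      linarith
    linarith
  have heq : ∀ e, f PSV.src (PSV.trade e) = w e := by
    have hle : ∀ e ∈ Finset.univ, f PSV.src (PSV.trade e) ≤ w e := fun e _ => by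
      simpa [psCap] using hfcap PSV.src (PSV.trade e)
    have hsum : ∑ e, f PSV.src (PSV.trade e) = ∑ e, w e :=
      le_antisymm (Finset.sum_le_sum hle) hge
    intro e
    exact ((Finset.sum_eq_sum_iff_of_le hle).mp hsum) e (Finset.mem_univ e)
  calc charFun w B S = ∑ e ∈ Finset.univ.filter (fun e => B e ⊆ S), w e := rfl
    _ ≤ ∑ e ∈ Finset.univ.filter (fun e => (B e ∩ S).Nonempty), w e := by
        apply Finset.sum_le_sum_of_subset_of_nonneg
        · intro e he
          simp only [Finset.mem_filter, Finset.mem_univ, true_and] at he ⊢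
          rw [Finset.inter_eq_left.mpr he]
          exact hBne e
        · intro e _ _; exact hw e
    _ = ∑ e ∈ Finset.univ.filter (fun e => (B e ∩ S).Nonempty), f PSV.src (PSV.trade e) :=
        Finset.sum_congr rfl fun e _ => (heq e).symm
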